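/- Let G be a D-regular Bonnet-Myers sharp graph of diameter L with pole x_0. For x_1 ∈ S_1(x_0) and x_2 ∈ S_2(x_0), the out-degrees satisfy d⁺(x_1) − d⁺(x_2) = (1/2)d⁰(x_2) + 1. -/

import Mathlib

open Finset

namespace BMS

open scoped Classical

variable {V : Type*}

/-- The uniform probability measure on the closed 1-ball of `x` in a `D`-regular graph. -/
noncomputable def mu (G : SimpleGraph V) (D : ℕ) (x : V) : V → ℝ :=
  fun v => if G.dist x v ≤ 1 then 1 / (D + 1) else 0

/-- The L¹-Wasserstein distance between `μ_x` and `μ_y`, as an infimum over transport plans. -/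
noncomputable def W1 (G : SimpleGraph V) [Fintype V] (D : ℕ) (x y : V) : ℝ :=
  sInf { c : ℝ | ∃ π : V → V → ℝ,
    (∀ u v, 0 ≤ π u v) ∧
    (∀ u, ∑ v, π u v = mu G D x u) ∧
    (∀ v, ∑ u, π u v = mu G D y v) ∧
    c = ∑ u, ∑ v, (G.dist u v : ℝ) * π u v }

/-- Ollivier Ricci curvature (Lin–Lu–Yau normalization for regular graphs). -/
noncomputable def kappa (G : SimpleGraph V) [Fintype V] (D : ℕ) (x y : V) : ℝ :=
  ((D + 1) / D) * (1 - W1 G D x y)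

/-- `G` is Bonnet–Myers sharp: the infimum of the curvature over edges equals `2 / L`. -/
def BMSharp (G : SimpleGraph V) [Fintype V] (D L : ℕ) : Prop :=
  sInf { k : ℝ | ∃ x y, G.Adj x y ∧ k = kappa G D x y } = 2 / (L : ℝ)

/-- Number of neighbors of `y` at distance `k` from `x0`. -/
noncomputable def sphDeg (G : SimpleGraph V) [Fintype V] (x0 y : V) (k : ℕ) : ℕ :=
  (Finset.univ.filter (fun v => G.Adj y v ∧ G.dist x0 v = k)).card

/-- Number of triangles containing the edge `x ~ y` (common neighbors of `x` and `y`). -/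
noncomputable def tri (G : SimpleGraph V) [Fintype V] (x y : V) : ℕ :=
  (Finset.univ.filter (fun v => G.Adj x v ∧ G.Adj y v)).card

/-- A good optimal transport map from `B_1(a)` to `B_1(b)`: a bijection between the 1-balls,
fixing exactly the vertices of `B_1(a) ∩ B_1(b)` (among the domain), whose cost realizes
the Wasserstein distance `W1 (μ_a, μ_b)`. -/
def goodMap (G : SimpleGraph V) [Fintype V] (D : ℕ) (a b : V) (T : V → V) : Prop :=
  Set.BijOn T {v | G.dist a v ≤ 1} {v | G.dist b v ≤ 1} ∧
  (∀ v, G.dist a v ≤ 1 → (T v = v ↔ G.dist b v ≤ 1)) ∧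
  (1 / (D + 1 : ℝ)) *
      ∑ v ∈ Finset.univ.filter (fun v => G.dist a v ≤ 1), (G.dist v (T v) : ℝ) =
    W1 G D a b

/-!
Write `C = D + 1 - 2D/L`. Testing the transport problem against a 1-Lipschitz `f`, the bound
`κ ≥ 2/L` on every edge gives `∑_{B₁(b)} f - ∑_{B₁(a)} f ≤ d(a, b) C`. Take `p` with
`d(x₀, p) = L` and apply this to `f = d(x₀, ·)` from `x₀` and to `f = d(p, ·)` from `p`: at a
vertex `v` on an `x₀`–`p` geodesic the two bounds add up to `(D + 1) L`, which is also the lower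
bound given by the triangle inequality. Hence every neighbour of `v` lies on such a geodesic again,
so every vertex does, and both bounds are equalities everywhere. Expanded in sphere degrees, the
equality for `d(x₀, ·)` reads `d⁺(v) - d⁻(v) = D (1 - 2k/L)` for `v ∈ S_k(x₀)`; the theorem
combines the cases `k = 1, 2` with `d⁻ + d⁰ + d⁺ = D`.
-/

theorem _root_.SimpleGraph.Connected.dist_le_one_iff {G : SimpleGraph V} (hconn : G.Connected)
    {x v : V} : G.dist x v ≤ 1 ↔ v = x ∨ G.Adj x v := by
  rw [Nat.le_one_iff_eq_zero_or_eq_one, hconn.dist_eq_zero_iff, SimpleGraph.dist_eq_one_iff_adj,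
    eq_comm]

theorem _root_.SimpleGraph.Walk.sub_le_length_mul {G : SimpleGraph V} {F : V → ℝ} {c : ℝ}
    (hF : ∀ a b, G.Adj a b → F b - F a ≤ c) {a b : V} (w : G.Walk a b) :
    F b - F a ≤ w.length * c := by
  induction w with
  | nil => simp
  | cons h w ih =>
    rw [SimpleGraph.Walk.length_cons]
    push_cast
    linarith [hF _ _ h]

theorem _root_.SimpleGraph.Connected.dist_sub_dist_le {G : SimpleGraph V} (hconn : G.Connected)
    (x u v : V) : (G.dist x v : ℝ) - G.dist x u ≤ G.dist u v := by
  rw [sub_le_iff_le_add']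
  exact_mod_cast hconn.dist_triangle

section

variable [Fintype V] {G : SimpleGraph V} {D L : ℕ}

noncomputable def ballSum (G : SimpleGraph V) (f : V → ℝ) (x : V) : ℝ :=
  ∑ v ∈ insert x (G.neighborFinset x), f v

lemma ballSum_eq_add_sum (G : SimpleGraph V) (f : V → ℝ) (x : V) :
    ballSum G f x = f x + ∑ v ∈ G.neighborFinset x, f v :=
  sum_insert (by simp)

lemma card_insert_neighborFinset (hreg : G.IsRegularOfDegree D) (x : V) :
    #(insert x (G.neighborFinset x)) = D + 1 := by
  rw [card_insert_of_notMem (by simp), G.card_neighborFinset_eq_degree, hreg x]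

lemma sum_mul_mu (hconn : G.Connected) (f : V → ℝ) (x : V) :
    ∑ v, f v * mu G D x v = ballSum G f x / (D + 1) := by
  have hball : univ.filter (fun v => G.dist x v ≤ 1) = insert x (G.neighborFinset x) := by
    ext v
    simp [hconn.dist_le_one_iff]
  simp only [mu, mul_ite, mul_zero, ← sum_filter, hball, ballSum, sum_div]
  exact sum_congr rfl fun v _ => by ring

lemma sum_mu (hconn : G.Connected) (hreg : G.IsRegularOfDegree D) (x : V) :
    ∑ v, mu G D x v = 1 := by
  have h := sum_mul_mu (D := D) hconn (fun _ => 1) x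
  simp only [one_mul] at h
  rw [h, ballSum, sum_const, card_insert_neighborFinset hreg, nsmul_one]
  push_cast
  exact div_self (by positivity)

/-- The easy half of Kantorovich duality. -/
lemma ballSum_sub_le_mul_W1 (hconn : G.Connected) (hreg : G.IsRegularOfDegree D)
    {f : V → ℝ} (hf : ∀ u v, f v - f u ≤ G.dist u v) (x y : V) :
    ballSum G f y - ballSum G f x ≤ (D + 1) * W1 G D x y := by
  rw [← div_le_iff₀' (by positivity), sub_div, ← sum_mul_mu hconn, ← sum_mul_mu hconn]
  refine le_csInf ⟨_, fun u v => mu G D x u * mu G D y v, fun u v => ?_, fun u => ?_,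
    fun v => ?_, rfl⟩ ?_
  · unfold mu
    positivity
  · rw [← mul_sum, sum_mu hconn hreg, mul_one]
  · rw [← sum_mul, sum_mu hconn hreg, one_mul]
  rintro c ⟨π, hπ, hrow, hcol, rfl⟩
  calc ∑ v, f v * mu G D y v - ∑ u, f u * mu G D x u
      = ∑ u, ∑ v, (f v - f u) * π u v := by
        simp only [sub_mul, sum_sub_distrib, ← hrow, ← hcol, mul_sum]
        rw [sum_comm (f := fun u v => f v * π u v)]
    _ ≤ ∑ u, ∑ v, (G.dist u v : ℝ) * π u v :=
        sum_le_sum fun u _ => sum_le_sum fun v _ => mul_le_mul_of_nonneg_right (hf u v) (hπ u v)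

lemma two_div_le_kappa (hBM : BMSharp G D L) {x y : V} (hadj : G.Adj x y) :
    2 / (L : ℝ) ≤ kappa G D x y := by
  have hbdd : BddBelow {k : ℝ | ∃ x y, G.Adj x y ∧ k = kappa G D x y} :=
    ((Set.finite_range fun p : V × V => kappa G D p.1 p.2).subset
      (by rintro k ⟨a, b, -, rfl⟩; exact ⟨(a, b), rfl⟩)).bddBelow
  exact hBM ▸ csInf_le hbdd ⟨x, y, hadj, rfl⟩

lemma ballSum_sub_le_of_adj (hconn : G.Connected) (hreg : G.IsRegularOfDegree D) (hD : 0 < D)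
    (hBM : BMSharp G D L) {f : V → ℝ} (hf : ∀ u v, f v - f u ≤ G.dist u v) {a b : V}
    (hadj : G.Adj a b) :
    ballSum G f b - ballSum G f a ≤ D + 1 - 2 * D / L := by
  have hκ := two_div_le_kappa hBM hadj
  have hD' : (0 : ℝ) < D := by exact_mod_cast hD
  have hW : 2 * D / L ≤ (D + 1) * (1 - W1 G D a b) := by
    calc (2 * D / L : ℝ) = D * (2 / L) := by ring
      _ ≤ D * kappa G D a b := by gcongr
      _ = (D + 1) * (1 - W1 G D a b) := by unfold kappa; field_simp
  linarith [ballSum_sub_le_mul_W1 hconn hreg hf a b]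

lemma ballSum_sub_le (hconn : G.Connected) (hreg : G.IsRegularOfDegree D) (hD : 0 < D)
    (hBM : BMSharp G D L) {f : V → ℝ} (hf : ∀ u v, f v - f u ≤ G.dist u v) (a b : V) :
    ballSum G f b - ballSum G f a ≤ G.dist a b * (D + 1 - 2 * D / L) := by
  obtain ⟨w, hw⟩ := hconn.exists_walk_length_eq_dist a b
  rw [← hw]
  exact w.sub_le_length_mul fun _ _ => ballSum_sub_le_of_adj hconn hreg hD hBM hf

lemma ballSum_dist_self (hreg : G.IsRegularOfDegree D) (x : V) :
    ballSum G (fun v => (G.dist x v : ℝ)) x = D := by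
  have h : ∀ v ∈ G.neighborFinset x, (G.dist x v : ℝ) = 1 := fun v hv => by
    simp [(G.mem_neighborFinset x v).mp hv]
  rw [ballSum_eq_add_sum, sum_congr rfl h, sum_const, G.card_neighborFinset_eq_degree, hreg x]
  simp

lemma ballSum_dist_le (hconn : G.Connected) (hreg : G.IsRegularOfDegree D) (hD : 0 < D)
    (hBM : BMSharp G D L) (x v : V) :
    ballSum G (fun u => (G.dist x u : ℝ)) v ≤ D + G.dist x v * (D + 1 - 2 * D / L) := by
  have := ballSum_sub_le hconn hreg hD hBM (hconn.dist_sub_dist_le x) x v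
  rw [ballSum_dist_self hreg] at this
  linarith

lemma ballSum_dist_add_ballSum_dist_le (hconn : G.Connected) (hreg : G.IsRegularOfDegree D)
    (hD : 0 < D) (hL : 0 < L) (hBM : BMSharp G D L) {x₀ p v : V}
    (hv : G.dist x₀ v + G.dist v p = L) :
    ballSum G (fun u => (G.dist x₀ u : ℝ)) v + ballSum G (fun u => (G.dist p u : ℝ)) v
      ≤ (D + 1) * L := by
  have hv' : (G.dist x₀ v : ℝ) + G.dist p v = L := by
    rw [SimpleGraph.dist_comm (u := p)]
    exact_mod_cast hv
  have hC : (G.dist x₀ v : ℝ) * (D + 1 - 2 * D / L) + G.dist p v * (D + 1 - 2 * D / L)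
      = (D + 1) * L - 2 * D := by
    rw [← add_mul, hv']
    field_simp
  linarith [ballSum_dist_le hconn hreg hD hBM x₀ v, ballSum_dist_le hconn hreg hD hBM p v]

/-- The bound of `ballSum_dist_add_ballSum_dist_le` is also the trivial lower bound coming from the
triangle inequality at each vertex of the closed neighbourhood, so that inequality is an equality at
every neighbour. -/
lemma dist_add_dist_eq_of_adj (hconn : G.Connected) (hreg : G.IsRegularOfDegree D) (hD : 0 < D)
    (hL : 0 < L) (hBM : BMSharp G D L) {x₀ p v u : V} (hp : G.dist x₀ p = L)
    (hv : G.dist x₀ v + G.dist v p = L) (hvu : G.Adj v u) :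
    G.dist x₀ u + G.dist u p = L := by
  set excess : V → ℝ := fun w => G.dist x₀ w + G.dist p w - L
  have hexcess : ∀ w, 0 ≤ excess w := fun w => by
    have := hconn.dist_triangle (u := x₀) (v := w) (w := p)
    rw [hp, SimpleGraph.dist_comm (u := w)] at this
    simp only [excess, sub_nonneg]
    exact_mod_cast this
  have hsum : ∑ w ∈ insert v (G.neighborFinset v), excess w = 0 := by
    refine le_antisymm ?_ (sum_nonneg fun w _ => hexcess w)
    simp only [excess, sum_sub_distrib, sum_add_distrib, sum_const, card_insert_neighborFinset hreg,
      nsmul_eq_mul]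
    have := ballSum_dist_add_ballSum_dist_le hconn hreg hD hL hBM hv
    simp only [ballSum] at this
    push_cast
    linarith
  have hu := (sum_eq_zero_iff_of_nonneg fun w _ => hexcess w).mp hsum u
    (mem_insert_of_mem ((G.mem_neighborFinset v u).mpr hvu))
  simp only [excess, sub_eq_zero] at hu
  rw [SimpleGraph.dist_comm (u := u)]
  exact_mod_cast hu

lemma dist_add_dist_eq (hconn : G.Connected) (hreg : G.IsRegularOfDegree D) (hD : 0 < D)
    (hL : 0 < L) (hBM : BMSharp G D L) {x₀ p : V} (hp : G.dist x₀ p = L) (v : V) :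
    G.dist x₀ v + G.dist v p = L := by
  obtain ⟨w⟩ := hconn.preconnected v x₀
  induction w with
  | nil => simpa using hp
  | cons h w ih => exact dist_add_dist_eq_of_adj hconn hreg hD hL hBM hp (ih hp) h.symm

lemma ballSum_dist_eq (hconn : G.Connected) (hreg : G.IsRegularOfDegree D) (hD : 0 < D)
    (hL : 0 < L) (hBM : BMSharp G D L) {x₀ p : V} (hp : G.dist x₀ p = L) (v : V) :
    ballSum G (fun u => (G.dist x₀ u : ℝ)) v = D + G.dist x₀ v * (D + 1 - 2 * D / L) := by
  have hinterval : ∀ u, (G.dist x₀ u : ℝ) + G.dist p u = L := fun u => by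
    rw [SimpleGraph.dist_comm (u := p)]
    exact_mod_cast dist_add_dist_eq hconn hreg hD hL hBM hp u
  have hsum : ballSum G (fun u => (G.dist x₀ u : ℝ)) v + ballSum G (fun u => (G.dist p u : ℝ)) v
      = (D + 1) * L := by
    rw [ballSum, ballSum, ← sum_add_distrib, sum_congr rfl fun u _ => hinterval u, sum_const,
      card_insert_neighborFinset hreg, nsmul_eq_mul]
    push_cast
    ring
  have hC : (G.dist x₀ v : ℝ) * (D + 1 - 2 * D / L) + G.dist p v * (D + 1 - 2 * D / L)
      = (D + 1) * L - 2 * D := by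
    rw [← add_mul, hinterval v]
    field_simp
  linarith [ballSum_dist_le hconn hreg hD hBM x₀ v, ballSum_dist_le hconn hreg hD hBM p v]

lemma sphDeg_eq_card_filter (G : SimpleGraph V) (x₀ v : V) (j : ℕ) :
    sphDeg G x₀ v j = #((G.neighborFinset v).filter (fun u => G.dist x₀ u = j)) := by
  unfold sphDeg
  congr 1
  ext u
  simp

lemma sphDeg_zero_of_dist_eq_one (hconn : G.Connected) {x₀ v : V} (hv : G.dist x₀ v = 1) :
    sphDeg G x₀ v 0 = 1 := by
  rw [sphDeg_eq_card_filter, card_eq_one]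
  refine ⟨x₀, ?_⟩
  ext u
  simp only [mem_filter, SimpleGraph.mem_neighborFinset, hconn.dist_eq_zero_iff, mem_singleton]
  constructor
  · rintro ⟨-, rfl⟩
    rfl
  · rintro rfl
    exact ⟨(SimpleGraph.dist_eq_one_iff_adj.mp hv).symm, rfl⟩

lemma sum_neighborFinset_comp_dist {x₀ v : V} {k : ℕ}
    (hv : G.dist x₀ v = k + 1) (g : ℕ → ℝ) :
    ∑ u ∈ G.neighborFinset v, g (G.dist x₀ u)
      = g k * sphDeg G x₀ v k + g (k + 1) * sphDeg G x₀ v (k + 1)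
        + g (k + 2) * sphDeg G x₀ v (k + 2) := by
  have hmaps : ∀ u ∈ G.neighborFinset v, G.dist x₀ u ∈ ({k, k + 1, k + 2} : Finset ℕ) := by
    intro u hu
    rcases ((G.mem_neighborFinset v u).mp hu).diff_dist_adj (u := x₀) with h | h | h <;>
      simp [h, hv]
  have hfiber : ∀ j, ∑ u ∈ (G.neighborFinset v).filter (fun u => G.dist x₀ u = j), g (G.dist x₀ u)
      = g j * sphDeg G x₀ v j := fun j => by
    rw [sum_congr rfl fun u hu => by rw [(mem_filter.mp hu).2], sum_const, nsmul_eq_mul,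
      sphDeg_eq_card_filter, mul_comm]
  rw [← sum_fiberwise_of_maps_to hmaps, sum_insert (by simp), sum_insert (by simp), sum_singleton,
    hfiber, hfiber, hfiber, add_assoc]

lemma sphDeg_add_sphDeg_add_sphDeg (hreg : G.IsRegularOfDegree D)
    {x₀ v : V} {k : ℕ} (hv : G.dist x₀ v = k + 1) :
    (sphDeg G x₀ v k + sphDeg G x₀ v (k + 1) + sphDeg G x₀ v (k + 2) : ℝ) = D := by
  have h := sum_neighborFinset_comp_dist hv fun _ => 1
  rw [sum_const, G.card_neighborFinset_eq_degree, hreg v] at h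
  simpa using h.symm

lemma ballSum_dist_eq_of_dist_eq_succ (hreg : G.IsRegularOfDegree D)
    {x₀ v : V} {k : ℕ} (hv : G.dist x₀ v = k + 1) :
    ballSum G (fun u => (G.dist x₀ u : ℝ)) v
      = (k + 1) * (D + 1) + sphDeg G x₀ v (k + 2) - sphDeg G x₀ v k := by
  rw [ballSum_eq_add_sum, sum_neighborFinset_comp_dist hv Nat.cast, hv,
    ← sphDeg_add_sphDeg_add_sphDeg hreg hv]
  push_cast
  ring

lemma sphDeg_succ_succ_sub_sphDeg (hconn : G.Connected) (hreg : G.IsRegularOfDegree D)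
    (hD : 0 < D) (hL : 0 < L) (hBM : BMSharp G D L) {x₀ p v : V} (hp : G.dist x₀ p = L) {k : ℕ}
    (hv : G.dist x₀ v = k + 1) :
    (sphDeg G x₀ v (k + 2) - sphDeg G x₀ v k : ℝ) = D - 2 * (k + 1) * D / L := by
  have h := ballSum_dist_eq hconn hreg hD hL hBM hp v
  rw [ballSum_dist_eq_of_dist_eq_succ hreg hv, hv] at h
  have hL' : (L : ℝ) ≠ 0 := by positivity
  field_simp at h ⊢
  push_cast at h
  linarith

end

theorem stmt_general [Fintype V] (G : SimpleGraph V) (hconn : G.Connected)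
    (D L : ℕ) (hD : 0 < D) (hL : 0 < L) (hreg : G.IsRegularOfDegree D)
    (hBM : BMSharp G D L)
    (x0 : V) (hpole : ∃ p, G.dist x0 p = L)
    (x1 x2 : V) (hx1 : G.dist x0 x1 = 1) (hx2 : G.dist x0 x2 = 2) :
    (sphDeg G x0 x1 2 : ℝ) - (sphDeg G x0 x2 3 : ℝ)
      = (sphDeg G x0 x2 2 : ℝ) / 2 + 1 := by
  obtain ⟨p, hp⟩ := hpole
  have h₁ := sphDeg_succ_succ_sub_sphDeg hconn hreg hD hL hBM hp (k := 0) hx1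
  have h₂ := sphDeg_succ_succ_sub_sphDeg hconn hreg hD hL hBM hp (k := 1) hx2
  have hcount := sphDeg_add_sphDeg_add_sphDeg hreg (k := 1) hx2
  norm_num [sphDeg_zero_of_dist_eq_one hconn hx1] at h₁ h₂ hcount
  linarith [show (4 * D / L : ℝ) = 2 * (2 * D / L) by ring]

theorem stmt [Fintype V] (G : SimpleGraph V) (hconn : G.Connected)
    (D L : ℕ) (hD : 0 < D) (hL : 0 < L) (hreg : G.IsRegularOfDegree D)
    (hdiam : G.diam = L) (hBM : BMSharp G D L)
    (x0 : V) (hpole : ∃ p, G.dist x0 p = L)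
    (x1 x2 : V) (hx1 : G.dist x0 x1 = 1) (hx2 : G.dist x0 x2 = 2) :
    (sphDeg G x0 x1 2 : ℝ) - (sphDeg G x0 x2 3 : ℝ)
      = (sphDeg G x0 x2 2 : ℝ) / 2 + 1 :=
  stmt_general G hconn D L hD hL hreg hBM x0 hpole x1 x2 hx1 hx2

end BMS
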